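/- Let 𝒯 be a finite tree (a connected acyclic simple graph) with at least one edge. Then the line graph hypergraph of 𝒯 — the hypergraph on the edge set E(𝒯) whose hyperedges are all singletons {e}, e ∈ E(𝒯), together with all pairs {e,f} of distinct edges of 𝒯 sharing a common vertex — is a connected contextual hypergraph. (This is the hypergraph underlying the operahedron associated to 𝒯.) -/

import Mathlib

open scoped Classical

noncomputable section

/-! ## Hypergraphs (nestohedra combinatorics), after Curien–Laplante-Anfossi:
hypergraphs, restrictions, connectivity, saturation, reconnected restriction,
constructs/constructions, the face order, the flip rewriting, and terms over the
associated signatures. -/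

/-- A hypergraph on a finite vertex set: a finite set of nonempty hyperedges whose union is
the vertex set, assumed atomic (every singleton is a hyperedge). -/
structure CLHypergraph (α : Type*) [DecidableEq α] where
  verts : Finset α
  edges : Finset (Finset α)
  edges_nonempty : ∀ e ∈ edges, e.Nonempty
  edges_subset : ∀ e ∈ edges, e ⊆ verts
  atomic : ∀ v ∈ verts, {v} ∈ edges

namespace CLHypergraph

variable {α : Type*} [DecidableEq α]

/-- The plain restriction `𝓗_X` of a hypergraph to a subset `X` of its vertices. -/
def restrict (H : CLHypergraph α) (X : Finset α) : CLHypergraph α where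
  verts := X ∩ H.verts
  edges := H.edges.filter (· ⊆ X)
  edges_nonempty e he := H.edges_nonempty e (Finset.mem_filter.mp he).1
  edges_subset e he :=
    Finset.subset_inter (Finset.mem_filter.mp he).2 (H.edges_subset e (Finset.mem_filter.mp he).1)
  atomic v hv := by
    rcases Finset.mem_inter.mp hv with ⟨h1, h2⟩
    exact Finset.mem_filter.mpr ⟨H.atomic v h2, Finset.singleton_subset_iff.mpr h1⟩

/-- A hypergraph is connected if its vertex set is nonempty and admits no nontrivial
partition `X₁ ∪ X₂` such that every edge lies in `X₁` or in `X₂`. -/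
def Connected (H : CLHypergraph α) : Prop :=
  H.verts.Nonempty ∧ ∀ X₁ X₂ : Finset α, X₁.Nonempty → X₂.Nonempty →
    Disjoint X₁ X₂ → X₁ ∪ X₂ = H.verts → ∃ e ∈ H.edges, ¬e ⊆ X₁ ∧ ¬e ⊆ X₂

/-- `C` is (the vertex set of) a connected component of `H`: a maximal connected subset. -/
def IsComponent (H : CLHypergraph α) (C : Finset α) : Prop :=
  C ⊆ H.verts ∧ (H.restrict C).Connected ∧
    ∀ D : Finset α, C ⊆ D → D ⊆ H.verts → (H.restrict D).Connected → D = C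

/-- `y` and `z` lie in the same connected component of `H`. -/
def SameComponent (H : CLHypergraph α) (y z : α) : Prop :=
  ∃ C : Finset α, H.IsComponent C ∧ y ∈ C ∧ z ∈ C

/-- The saturation `Sat(𝓗)`: the set of (nonempty) connected subsets of vertices. -/
def sat (H : CLHypergraph α) : Finset (Finset α) :=
  H.verts.powerset.filter fun X => (H.restrict X).Connected

theorem singleton_connected (H : CLHypergraph α) {v : α} (hv : v ∈ H.verts) :
    (H.restrict {v}).Connected := by
  constructor
  · exact ⟨v, Finset.mem_inter.mpr ⟨Finset.mem_singleton_self v, hv⟩⟩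
  · intro X₁ X₂ h₁ h₂ hd hu
    exfalso
    have hv' : ({v} : Finset α) ∩ H.verts = {v} :=
      Finset.inter_eq_left.mpr (Finset.singleton_subset_iff.mpr hv)
    have hu' : X₁ ∪ X₂ = ({v} : Finset α) := hu.trans hv'
    have hX₁ : X₁ ⊆ {v} := hu' ▸ Finset.subset_union_left
    have hX₂ : X₂ ⊆ {v} := hu' ▸ Finset.subset_union_right
    obtain ⟨a, ha⟩ := h₁
    obtain ⟨b, hb⟩ := h₂
    have ha' := Finset.mem_singleton.mp (hX₁ ha)
    have hb' := Finset.mem_singleton.mp (hX₂ hb)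
    subst ha'; exact Finset.disjoint_left.mp hd ha (hb' ▸ hb)

/-- The reconnected restriction `𝓗 ↾ X` of `𝓗` to `X`. -/
def reconRestrict (H : CLHypergraph α) (X : Finset α) : CLHypergraph α where
  verts := X ∩ H.verts
  edges := (H.sat.image (· ∩ X)).filter (·.Nonempty)
  edges_nonempty e he := (Finset.mem_filter.mp he).2
  edges_subset := by
    intro e he
    rcases Finset.mem_image.mp (Finset.mem_filter.mp he).1 with ⟨Z, hZ, rfl⟩
    have hZv : Z ⊆ H.verts := Finset.mem_powerset.mp (Finset.mem_filter.mp hZ).1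
    exact fun a ha => Finset.mem_inter.mpr
      ⟨(Finset.mem_inter.mp ha).2, hZv (Finset.mem_inter.mp ha).1⟩
  atomic := by
    intro v hv
    rcases Finset.mem_inter.mp hv with ⟨h1, h2⟩
    refine Finset.mem_filter.mpr ⟨Finset.mem_image.mpr ⟨{v}, ?_, ?_⟩, ?_⟩
    · exact Finset.mem_filter.mpr
        ⟨Finset.mem_powerset.mpr (Finset.singleton_subset_iff.mpr h2),
         H.singleton_connected h2⟩
    · exact Finset.inter_eq_left.mpr (Finset.singleton_subset_iff.mpr h1)
    · exact ⟨v, by simp [Finset.inter_eq_left.mpr (Finset.singleton_subset_iff.mpr h1)]⟩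

/-- `x ⇝ {y,z}` in `𝓗`: after removing `x`, the vertices `y` and `z` lie in the same
connected component.  Its negation is "`x` disconnects `y` and `z` in `𝓗`". -/
def Links (H : CLHypergraph α) (x y z : α) : Prop :=
  (H.restrict (H.verts \ {x})).SameComponent y z

/-- A hypergraph is contextual if for every connected subset `Y` of cardinality at least 3
and all distinct `x, y, z ∈ Y`, `x` disconnects `y` and `z` in `𝓗_Y` iff it does in `𝓗`. -/
def Contextual (H : CLHypergraph α) : Prop :=
  ∀ Y : Finset α, Y ⊆ H.verts → (H.restrict Y).Connected → 3 ≤ Y.card →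
    ∀ x y z : α, x ∈ Y → y ∈ Y → z ∈ Y → x ≠ y → y ≠ z → x ≠ z →
      ((H.restrict Y).Links x y z ↔ H.Links x y z)

end CLHypergraph

/-- Finite rooted trees with nodes decorated by finite sets (potential constructs). -/
inductive FTree (α : Type*) : Type _ where
  | node : Finset α → List (FTree α) → FTree α

namespace FTree

variable {α : Type*} [DecidableEq α]

/-- The decoration of the root node. -/
def label : FTree α → Finset α
  | node Y _ => Y

/-- The list of children of the root node. -/
def children : FTree α → List (FTree α)
  | node _ ts => ts

/-- The support of a tree: the union of the decorations of its nodes. -/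
def support : FTree α → Finset α
  | node Y [] => Y
  | node Y (t :: ts) => support t ∪ support (node Y ts)

/-- The list of decorations of the nodes of a tree. -/
def labels : FTree α → List (Finset α)
  | node Y [] => [Y]
  | node Y (t :: ts) => labels t ++ labels (node Y ts)

/-- The dimension of a construct: the sum over its nodes `X` of `|X| - 1`. -/
def dim (T : FTree α) : ℕ := (T.labels.map fun X => X.card - 1).sum

mutual
  /-- The (full) subtree rooted at the node decorated by `X`, if any. -/
  def subtreeAt : FTree α → Finset α → Option (FTree α)
    | node Y ts, X => if Y = X then some (node Y ts) else subtreeAtList ts X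
  def subtreeAtList : List (FTree α) → Finset α → Option (FTree α)
    | [], _ => none
    | t :: ts, X => (subtreeAt t X).elim (subtreeAtList ts X) some
end

/-- The support `supp (T ↾ X)` of the subtree rooted at the node decorated by `X`
(or `∅` if there is no such node). -/
def suppAt (T : FTree α) (X : Finset α) : Finset α :=
  ((T.subtreeAt X).map support).getD ∅

mutual
  /-- The list of supports of the subtrees rooted at the nodes of `T` (its nested set). -/
  def nests : FTree α → List (Finset α)
    | node Y ts => support (node Y ts) :: nestsList ts
  def nestsList : List (FTree α) → List (Finset α)
    | [] => []
    | t :: ts => nests t ++ nestsList ts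
end

/-- The nested set of a tree, as a finite set. -/
def nestSet (T : FTree α) : Finset (Finset α) := T.nests.toFinset

/-- `S ≺ T` (`S` is covered by `T`) in the face order: `T` is obtained from `S` by
contracting one edge between a node and its father (equivalently, the nested set of `T`
is obtained from that of `S` by removing one non-root element). -/
def CoveredBy (S T : FTree α) : Prop :=
  ∃ N ∈ S.nests, N ≠ S.support ∧ T.nestSet = S.nestSet.erase N

/-- The face (subface) order `S ≼ T` on constructs: the reflexive–transitive closure of
the covering relation `≺`. -/
def FaceLe (S T : FTree α) : Prop := Relation.ReflTransGen CoveredBy S T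

/-- `IsSubtree S T`: `S` is a (full) subtree of `T`. -/
inductive IsSubtree : FTree α → FTree α → Prop
  | refl (t : FTree α) : IsSubtree t t
  | child {s t u : FTree α} : IsSubtree s t → t ∈ u.children → IsSubtree s u

/-- In `T`, the node decorated by `X` has a child decorated by `Y`. -/
def ParentChild (X Y : Finset α) (T : FTree α) : Prop :=
  ∃ R : FTree α, IsSubtree R T ∧ R.label = X ∧ ∃ t ∈ R.children, t.label = Y

mutual
  /-- Pruning: remove all (subtrees rooted at) nodes whose decoration is not a subset
  of `X`, keeping the root. -/
  def prune (X : Finset α) : FTree α → FTree α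
    | node Y ts => node Y (pruneList X ts)
  def pruneList (X : Finset α) : List (FTree α) → List (FTree α)
    | [] => []
    | t :: ts => if t.label ⊆ X then prune X t :: pruneList X ts else pruneList X ts
end

end FTree

/-- `IsConstruct H T`: the tree `T` is a construct of the hypergraph `H`: its root `Y` is a
nonempty subset of the vertices, its children are constructs of the connected components of
`𝓗 ∖ Y` (one for each component, listed by increasing maximal vertex). -/
inductive IsConstruct {α : Type*} [LinearOrder α] : CLHypergraph α → FTree α → Prop
  | node {H : CLHypergraph α} (Y : Finset α) (ts : List (FTree α))
      (hY : Y.Nonempty) (hYsub : Y ⊆ H.verts)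
      (hmem : ∀ t ∈ ts, (H.restrict (H.verts \ Y)).IsComponent t.support)
      (hcover : ∀ C : Finset α, (H.restrict (H.verts \ Y)).IsComponent C →
        ∃ t ∈ ts, t.support = C)
      (hsorted : ts.Pairwise fun a b => a.support.max < b.support.max)
      (hchild : ∀ t ∈ ts, IsConstruct (H.restrict t.support) t) :
      IsConstruct H (FTree.node Y ts)

section ConstructionOrder

variable {α : Type*} [LinearOrder α]

/-- A construction: a construct all of whose nodes are singletons (a vertex of the
nestohedron). -/
def IsConstruction (H : CLHypergraph α) (T : FTree α) : Prop :=
  IsConstruct H T ∧ ∀ X ∈ T.labels, X.card = 1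

/-- An `X`-face: a 2-dimensional construct whose unique non-singleton node is decorated
by `X`, of cardinality 3. -/
def IsXFace (H : CLHypergraph α) (X : Finset α) (T : FTree α) : Prop :=
  IsConstruct H T ∧ X.card = 3 ∧ X ∈ T.labels ∧ ∀ Y ∈ T.labels, Y ≠ X → Y.card = 1

/-- Two distinct constructions are joined by an edge of the nestohedron: both are covered
by a common 1-dimensional construct. -/
def EdgeJoined (H : CLHypergraph α) (S T : FTree α) : Prop :=
  IsConstruction H S ∧ IsConstruction H T ∧ S ≠ T ∧
  ∃ V : FTree α, IsConstruct H V ∧ V.dim = 1 ∧ FTree.CoveredBy S V ∧ FTree.CoveredBy T V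

/-- The flip rewriting relation `S → T` on constructions of an ordered hypergraph:
`S` and `T` are the two endpoints of an edge whose 1-dimensional face has unique
non-singleton node `{x, y}` with `x < y`, and in `S` the node `{x}` is the parent of the
node `{y}`. -/
def Flip (H : CLHypergraph α) (S T : FTree α) : Prop :=
  IsConstruction H S ∧ IsConstruction H T ∧ S ≠ T ∧
  ∃ (V : FTree α) (x y : α), IsConstruct H V ∧ V.dim = 1 ∧ x ≠ y ∧
    ({x, y} : Finset α) ∈ V.labels ∧ FTree.CoveredBy S V ∧ FTree.CoveredBy T V ∧
    FTree.ParentChild ({x} : Finset α) ({y} : Finset α) S ∧ x < y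

/-- The coordinate vector of a construction `S` of `H`:
`v^S_x = |{e ∈ Sat(𝓗) : x ∈ e ⊆ supp (S ↾ x)}|`. -/
def coordVec (H : CLHypergraph α) (S : FTree α) (x : α) : ℕ :=
  (H.sat.filter fun e => x ∈ e ∧ e ⊆ S.suppAt {x}).card

end ConstructionOrder

/-- Raw terms over the signature `Σ_𝓗` (and `Σ^c_𝓗`): variables are (connected) subsets,
function symbols are pairs `(X, Y)` of subsets, applied to a list of arguments. -/
inductive HTerm (α : Type*) : Type _ where
  | var : Finset α → HTerm α
  | app : Finset α → Finset α → List (HTerm α) → HTerm α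

namespace HTerm

variable {α : Type*} [DecidableEq α]

/-- The (output) sort of a term. -/
def sortOf : HTerm α → Finset α
  | var A => A
  | app _ Y _ => Y

/-- The list of variables occurring in a term. -/
def varsList : HTerm α → List (Finset α)
  | var A => [A]
  | app _ _ [] => []
  | app X Y (t :: ts) => varsList t ++ varsList (app X Y ts)

/-- The list of first components of the function symbols occurring in a term. -/
def appFirsts : HTerm α → List (Finset α)
  | var _ => []
  | app X _ [] => [X]
  | app X Y (t :: ts) => appFirsts t ++ appFirsts (app X Y ts)

/-- A term is closed if it contains no variables. -/
def Closed (t : HTerm α) : Prop := t.varsList = []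

/-- The union `⋃ var(t)` of the variables of a term. -/
def varsUnion (t : HTerm α) : Finset α := t.varsList.foldr (· ∪ ·) ∅

mutual
  /-- Projection of a term to a decorated tree: every function symbol `(X, Y)` is sent to
  its first component `X`, and all variables are pruned. -/
  def toTree : HTerm α → FTree α
    | .var A => .node A []
    | .app X _ ts => .node X (toTreeList ts)
  def toTreeList : List (HTerm α) → List (FTree α)
    | [] => []
    | .var _ :: ts => toTreeList ts
    | t :: ts => toTree t :: toTreeList ts
end

end HTerm

/-- Well-formed terms over the signature `Σ_𝓗` associated with the hypergraph `H`:
a variable is a connected subset (its own sort); a function symbol `(X, Y)` (with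
`∅ ≠ X ⊆ Y ⊆ H` and `Y` connected) is applied to arguments whose sorts are exactly the
connected components of `𝓗_Y ∖ X`, listed by increasing maximal vertex. -/
inductive IsTerm {α : Type*} [LinearOrder α] (H : CLHypergraph α) : HTerm α → Prop
  | var (A : Finset α) : A ⊆ H.verts → (H.restrict A).Connected → IsTerm H (.var A)
  | app (X Y : Finset α) (ts : List (HTerm α)) :
      X.Nonempty → X ⊆ Y → Y ⊆ H.verts → (H.restrict Y).Connected →
      (∀ t ∈ ts, (H.restrict (Y \ X)).IsComponent t.sortOf) →
      (∀ C : Finset α, (H.restrict (Y \ X)).IsComponent C → ∃ t ∈ ts, t.sortOf = C) →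
      ts.Pairwise (fun a b => a.sortOf.max < b.sortOf.max) →
      (∀ t ∈ ts, IsTerm H t) →
      IsTerm H (.app X Y ts)


/-- The line-graph hypergraph of a simple graph `G`: its vertices are the edges of `G`,
its hyperedges are all singletons together with all pairs of distinct edges of `G`
sharing a common vertex. -/
def lineH {V : Type*} [Fintype V] [DecidableEq V] (G : SimpleGraph V)
    [DecidableRel G.Adj] : CLHypergraph (Sym2 V) where
  verts := G.edgeFinset
  edges := G.edgeFinset.image (fun e => {e}) ∪
    (((G.edgeFinset ×ˢ G.edgeFinset).filter
      (fun p => p.1 ≠ p.2 ∧ ∃ v : V, v ∈ p.1 ∧ v ∈ p.2)).image (fun p => {p.1, p.2}))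
  edges_nonempty := by
    intro e he
    rcases Finset.mem_union.mp he with h | h
    · rcases Finset.mem_image.mp h with ⟨a, _, rfl⟩
      exact ⟨a, Finset.mem_singleton_self a⟩
    · rcases Finset.mem_image.mp h with ⟨p, _, rfl⟩
      exact ⟨p.1, Finset.mem_insert_self _ _⟩
  edges_subset := by
    intro e he
    rcases Finset.mem_union.mp he with h | h
    · rcases Finset.mem_image.mp h with ⟨a, ha, rfl⟩
      exact Finset.singleton_subset_iff.mpr ha
    · rcases Finset.mem_image.mp h with ⟨p, hp, rfl⟩
      have hp' := Finset.mem_product.mp (Finset.mem_filter.mp hp).1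
      exact Finset.insert_subset_iff.mpr ⟨hp'.1, Finset.singleton_subset_iff.mpr hp'.2⟩
  atomic := fun v hv => Finset.mem_union_left _ (Finset.mem_image_of_mem _ hv)

/-! Hyperedge-connectivity in the line hypergraph of a set `S` of edges is vertex-connectivity in
the graph spanned by `S`. Restricting a hypergraph can only disconnect, so one direction of
contextuality is free. For the other, let `y, z ∈ Y` be joined in the tree avoiding `x`: endpoints
of `y` and `z` are joined by a path spanned by `Y` (as `Y` is connected) and by a path avoiding `x`.
Paths in a forest are unique, so one path does both, and it is spanned by `Y \ {x}`. -/

namespace CLHypergraph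

variable {α : Type*} [DecidableEq α] {H : CLHypergraph α} {C X Y : Finset α} {a b : α}

def Adj (H : CLHypergraph α) (a b : α) : Prop := ∃ e ∈ H.edges, a ∈ e ∧ b ∈ e

def Reach (H : CLHypergraph α) : α → α → Prop := Relation.ReflTransGen H.Adj

theorem Adj.symm (h : H.Adj a b) : H.Adj b a :=
  let ⟨e, he, ha, hb⟩ := h; ⟨e, he, hb, ha⟩

instance : Std.Symm H.Adj := ⟨fun _ _ => Adj.symm⟩

theorem Reach.symm (h : H.Reach a b) : H.Reach b a :=
  Std.Symm.symm (r := Relation.ReflTransGen H.Adj) a b h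

theorem Reach.trans {c : α} (hab : H.Reach a b) (hbc : H.Reach b c) : H.Reach a c :=
  Relation.ReflTransGen.trans hab hbc

def IsEdgeClosed (H : CLHypergraph α) (C : Finset α) : Prop :=
  ∀ e ∈ H.edges, ∀ c ∈ e, c ∈ C → e ⊆ C

theorem Reach.mem_of_isEdgeClosed (hC : H.IsEdgeClosed C) (ha : a ∈ C)
    (h : H.Reach a b) : b ∈ C := by
  induction h with
  | refl => exact ha
  | tail _ hadj ih =>
    obtain ⟨e, he, hce, hde⟩ := hadj
    exact hC e he _ hce ih hde

@[simp]
theorem restrict_verts (H : CLHypergraph α) (X : Finset α) :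
    (H.restrict X).verts = X ∩ H.verts := rfl

theorem mem_restrict_edges {e : Finset α} : e ∈ (H.restrict X).edges ↔ e ∈ H.edges ∧ e ⊆ X :=
  Finset.mem_filter

theorem restrict_adj_iff : (H.restrict X).Adj a b ↔ ∃ e ∈ H.edges, e ⊆ X ∧ a ∈ e ∧ b ∈ e := by
  simp only [Adj, mem_restrict_edges, and_assoc]

theorem restrict_self (H : CLHypergraph α) : H.restrict H.verts = H := by
  obtain ⟨V, E, _, hsub, _⟩ := H
  simp only [restrict, mk.injEq, Finset.inter_self, true_and]
  exact Finset.filter_true_of_mem hsub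

theorem restrict_restrict (h : X ⊆ Y) : (H.restrict Y).restrict X = H.restrict X := by
  simp only [restrict, mk.injEq, Finset.filter_filter]
  constructor
  · rw [← Finset.inter_assoc, Finset.inter_eq_left.mpr h]
  · exact Finset.filter_congr fun e _ => ⟨fun h' => h'.2, fun h' => ⟨h'.trans h, h'⟩⟩

theorem Reach.restrict_mono (h : X ⊆ Y) (hr : (H.restrict X).Reach a b) :
    (H.restrict Y).Reach a b :=
  Relation.ReflTransGen.mono (fun _ _ hadj =>
    let ⟨e, he, heX, hae, hbe⟩ := restrict_adj_iff.mp hadj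
    restrict_adj_iff.mpr ⟨e, he, heX.trans h, hae, hbe⟩) _ _ hr

theorem Reach.of_restrict (hr : (H.restrict X).Reach a b) : H.Reach a b :=
  Relation.ReflTransGen.mono (fun _ _ hadj =>
    let ⟨e, he, _, hae, hbe⟩ := restrict_adj_iff.mp hadj
    ⟨e, he, hae, hbe⟩) _ _ hr

theorem Reach.restrict_of_isEdgeClosed (hC : H.IsEdgeClosed C) (ha : a ∈ C)
    (h : H.Reach a b) : (H.restrict C).Reach a b := by
  induction h with
  | refl => exact .refl
  | tail hac hadj ih =>
    obtain ⟨e, he, hce, hde⟩ := hadj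
    have hcC : _ ∈ C := Reach.mem_of_isEdgeClosed hC ha hac
    exact ih.tail (restrict_adj_iff.mpr ⟨e, he, hC e he _ hce hcC, hce, hde⟩)

theorem connected_iff :
    H.Connected ↔ H.verts.Nonempty ∧ ∀ a ∈ H.verts, ∀ b ∈ H.verts, H.Reach a b := by
  refine ⟨fun hconn => ⟨hconn.1, fun a ha b hb => ?_⟩, fun ⟨hne, hreach⟩ => ⟨hne, ?_⟩⟩
  · by_contra hab
    obtain ⟨e, he, he₁, he₂⟩ := hconn.2 (H.verts.filter (H.Reach a))
      (H.verts.filter fun c => ¬H.Reach a c) ⟨a, by simpa using ⟨ha, .refl⟩⟩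
      ⟨b, by simpa using ⟨hb, hab⟩⟩ (Finset.disjoint_filter_filter_not _ _ _)
      (Finset.filter_union_filter_not_eq _ _)
    obtain ⟨c, hce, hc⟩ := Finset.not_subset.mp he₂
    obtain ⟨d, hde, hd⟩ := Finset.not_subset.mp he₁
    have hac : H.Reach a c := by simpa [H.edges_subset e he hce] using hc
    exact hd (Finset.mem_filter.mpr ⟨H.edges_subset e he hde, hac.tail ⟨e, he, hce, hde⟩⟩)
  · intro X₁ X₂ ⟨a, ha⟩ ⟨b, hb⟩ hdisj hunion
    by_contra! hsplit
    have hclosed : H.IsEdgeClosed X₁ := fun e he c hce hc =>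
      (em (e ⊆ X₁)).elim id fun h =>
        absurd (hsplit e he h hce) (Finset.disjoint_left.mp hdisj hc)
    have hV : ∀ {c}, c ∈ X₁ ∨ c ∈ X₂ → c ∈ H.verts := fun h => hunion ▸ Finset.mem_union.mpr h
    exact Finset.disjoint_left.mp hdisj
      ((hreach a (hV (.inl ha)) b (hV (.inr hb))).mem_of_isEdgeClosed hclosed ha) hb

theorem sameComponent_iff {y z : α} :
    H.SameComponent y z ↔ y ∈ H.verts ∧ z ∈ H.verts ∧ H.Reach y z := by
  constructor
  · rintro ⟨C, ⟨hCV, hconn, -⟩, hy, hz⟩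
    have hCV' : C ∩ H.verts = C := Finset.inter_eq_left.mpr hCV
    refine ⟨hCV hy, hCV hz, Reach.of_restrict (X := C) ?_⟩
    exact (connected_iff.mp hconn).2 y (by simpa [hCV'] using hy) z (by simpa [hCV'] using hz)
  · rintro ⟨hy, hz, hyz⟩
    set C := H.verts.filter (H.Reach y)
    have hCV : C ∩ H.verts = C := Finset.inter_eq_left.mpr (Finset.filter_subset _ _)
    have hclosed : H.IsEdgeClosed C := fun e he c hce hc d hde =>
      Finset.mem_filter.mpr ⟨H.edges_subset e he hde,
        (Finset.mem_filter.mp hc).2.tail ⟨e, he, hce, hde⟩⟩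
    have hyC : y ∈ C := Finset.mem_filter.mpr ⟨hy, .refl⟩
    have hreachC : ∀ c ∈ C, (H.restrict C).Reach y c := fun c hc =>
      (Finset.mem_filter.mp hc).2.restrict_of_isEdgeClosed hclosed hyC
    refine ⟨C, ⟨Finset.filter_subset _ _, ?_, fun D hCD hDV hDconn => ?_⟩, hyC,
      Finset.mem_filter.mpr ⟨hz, hyz⟩⟩
    · rw [connected_iff, restrict_verts, hCV]
      exact ⟨⟨y, hyC⟩, fun a ha b hb => (hreachC a ha).symm.trans (hreachC b hb)⟩
    · refine Finset.Subset.antisymm (fun d hd => Finset.mem_filter.mpr ⟨hDV hd, ?_⟩) hCD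
      have hDV' : D ∩ H.verts = D := Finset.inter_eq_left.mpr hDV
      refine Reach.of_restrict (X := D) ((connected_iff.mp hDconn).2 y ?_ d ?_) <;>
        simp [hDV', hd, hCD hyC]

theorem restrict_links_iff (hY : Y ⊆ H.verts) {x y z : α} :
    (H.restrict Y).Links x y z ↔ (H.restrict (Y \ {x})).SameComponent y z := by
  rw [Links, restrict_verts, Finset.inter_eq_left.mpr hY, restrict_restrict Finset.sdiff_subset]

theorem contextual_of_reach
    (h : ∀ Y ⊆ H.verts, (H.restrict Y).Connected → ∀ x ∈ Y, ∀ y ∈ Y, ∀ z ∈ Y, y ≠ x → z ≠ x →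
      (H.restrict (H.verts \ {x})).Reach y z → (H.restrict (Y \ {x})).Reach y z) :
    H.Contextual := by
  intro Y hY hconn _ x y z hx hy hz hxy _ hxz
  rw [restrict_links_iff hY, Links, sameComponent_iff, sameComponent_iff]
  simp only [restrict_verts, Finset.mem_inter, Finset.mem_sdiff, Finset.mem_singleton]
  constructor
  · rintro ⟨⟨⟨-, -⟩, hyV⟩, ⟨⟨-, -⟩, hzV⟩, hr⟩
    exact ⟨⟨⟨hyV, hxy.symm⟩, hyV⟩, ⟨⟨hzV, hxz.symm⟩, hzV⟩,
      hr.restrict_mono (Finset.sdiff_subset_sdiff hY le_rfl)⟩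
  · rintro ⟨-, -, hr⟩
    exact ⟨⟨⟨hy, hxy.symm⟩, hY hy⟩, ⟨⟨hz, hxz.symm⟩, hY hz⟩,
      h Y hY hconn x hx y hy z hz hxy.symm hxz.symm hr⟩

end CLHypergraph

theorem SimpleGraph.IsAcyclic.reachable_inf {V : Type*} {G H₁ H₂ : SimpleGraph V}
    (hG : G.IsAcyclic) (h₁ : H₁ ≤ G) (h₂ : H₂ ≤ G) {u v : V}
    (hr₁ : H₁.Reachable u v) (hr₂ : H₂.Reachable u v) : (H₁ ⊓ H₂).Reachable u v := by
  obtain ⟨p, hp⟩ := hr₁.exists_isPath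
  obtain ⟨q, hq⟩ := hr₂.exists_isPath
  have hpq : p.mapLe h₁ = q.mapLe h₂ :=
    congrArg Subtype.val ((hG.subsingleton_path u v).elim ⟨_, hp.mapLe h₁⟩ ⟨_, hq.mapLe h₂⟩)
  have hedges : p.edges = q.edges := by
    rw [← Walk.edges_mapLe_eq_edges h₁, hpq, Walk.edges_mapLe_eq_edges]
  refine ⟨p.transfer _ fun e he => ?_⟩
  rw [SimpleGraph.edgeSet_inf]
  exact ⟨p.edges_subset_edgeSet he, q.edges_subset_edgeSet (hedges ▸ he)⟩

theorem SimpleGraph.reachable_fromEdgeSet_of_mem {V : Type*} {S : Set (Sym2 V)} {e : Sym2 V}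
    (he : e ∈ S) {v w : V} (hv : v ∈ e) (hw : w ∈ e) : (fromEdgeSet S).Reachable v w := by
  obtain rfl | hvw := eq_or_ne v w
  · rfl
  · rw [(Sym2.mem_and_mem_iff hvw).mp ⟨hv, hw⟩] at he
    exact (fromEdgeSet_adj S).mpr ⟨he, hvw⟩ |>.reachable

theorem SimpleGraph.fromEdgeSet_le_of_subset_edgeFinset {V : Type*} {G : SimpleGraph V}
    [Fintype G.edgeSet] {S : Finset (Sym2 V)} (hS : S ⊆ G.edgeFinset) :
    fromEdgeSet (S : Set (Sym2 V)) ≤ G :=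
  (fromEdgeSet_le G).mpr (Set.sdiff_subset.trans (G.coe_edgeFinset ▸ Finset.coe_subset.mpr hS))

section LineHypergraph

open SimpleGraph CLHypergraph

variable {V : Type*} [Fintype V] [DecidableEq V] {G : SimpleGraph V} [DecidableRel G.Adj]
  {S : Finset (Sym2 V)} {a b : Sym2 V}

@[simp]
theorem lineH_verts : (lineH G).verts = G.edgeFinset := rfl

theorem exists_eq_pair_of_mem_lineH_edges {e : Finset (Sym2 V)} (he : e ∈ (lineH G).edges) :
    ∃ a b, e = {a, b} ∧ ∃ w, w ∈ a ∧ w ∈ b := by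
  rcases Finset.mem_union.mp he with h | h
  · obtain ⟨a, -, rfl⟩ := Finset.mem_image.mp h
    exact ⟨a, a, by simp, _, Sym2.out_fst_mem a, Sym2.out_fst_mem a⟩
  · obtain ⟨p, hp, rfl⟩ := Finset.mem_image.mp h
    exact ⟨p.1, p.2, rfl, (Finset.mem_filter.mp hp).2.2⟩

theorem pair_mem_lineH_edges (ha : a ∈ G.edgeFinset) (hb : b ∈ G.edgeFinset)
    (hab : ∃ w, w ∈ a ∧ w ∈ b) : ({a, b} : Finset (Sym2 V)) ∈ (lineH G).edges := by
  obtain rfl | hne := eq_or_ne a b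
  · rw [Finset.pair_eq_singleton]
    exact (lineH G).atomic a ha
  · exact Finset.mem_union_right _ (Finset.mem_image.mpr
      ⟨(a, b), Finset.mem_filter.mpr ⟨Finset.mem_product.mpr ⟨ha, hb⟩, hne, hab⟩, rfl⟩)

theorem lineH_restrict_adj_iff (hS : S ⊆ G.edgeFinset) :
    ((lineH G).restrict S).Adj a b ↔ a ∈ S ∧ b ∈ S ∧ ∃ w, w ∈ a ∧ w ∈ b := by
  rw [restrict_adj_iff]
  constructor
  · rintro ⟨e, he, heS, hae, hbe⟩
    obtain ⟨c, d, rfl, w, hwc, hwd⟩ := exists_eq_pair_of_mem_lineH_edges he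
    simp only [Finset.mem_insert, Finset.mem_singleton] at hae hbe
    refine ⟨heS (by simp [hae]), heS (by simp [hbe]), w, ?_, ?_⟩ <;> aesop
  · rintro ⟨ha, hb, hab⟩
    exact ⟨{a, b}, pair_mem_lineH_edges (hS ha) (hS hb) hab,
      Finset.insert_subset_iff.mpr ⟨ha, Finset.singleton_subset_iff.mpr hb⟩, by simp, by simp⟩

theorem lineH_restrict_reach_iff (hS : S ⊆ G.edgeFinset) (ha : a ∈ S) (hb : b ∈ S) {v w : V}
    (hv : v ∈ a) (hw : w ∈ b) :
    ((lineH G).restrict S).Reach a b ↔ (fromEdgeSet (S : Set (Sym2 V))).Reachable v w := by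
  constructor
  · intro hr
    clear hb
    induction hr generalizing w with
    | refl => exact reachable_fromEdgeSet_of_mem (Finset.mem_coe.mpr ha) hv hw
    | tail _ hadj ih =>
      obtain ⟨-, hdS, t, htc, htd⟩ := (lineH_restrict_adj_iff hS).mp hadj
      exact (ih htc).trans (reachable_fromEdgeSet_of_mem (Finset.mem_coe.mpr hdS) htd hw)
  · rintro ⟨p⟩
    induction p generalizing a with
    | nil => exact .single ((lineH_restrict_adj_iff hS).mpr ⟨ha, hb, _, hv, hw⟩)
    | cons hadj _ ih =>
      have hedge : s(_, _) ∈ S := ((fromEdgeSet_adj _).mp hadj).1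
      exact .head ((lineH_restrict_adj_iff hS).mpr ⟨ha, hedge, _, hv, Sym2.mem_mk_left _ _⟩)
        (ih hedge (Sym2.mem_mk_right _ _) hw)

theorem lineH_connected (hG : G.Connected) (hE : G.edgeFinset.Nonempty) :
    (lineH G).Connected := by
  refine connected_iff.mpr ⟨hE, fun a ha b hb => ?_⟩
  rw [← (lineH G).restrict_self]
  refine (lineH_restrict_reach_iff subset_rfl ha hb (Sym2.out_fst_mem a)
    (Sym2.out_fst_mem b)).mpr ?_
  rw [coe_edgeFinset, fromEdgeSet_edgeSet]
  exact hG.preconnected _ _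

theorem lineH_contextual (hG : G.IsAcyclic) : (lineH G).Contextual := by
  refine contextual_of_reach fun Y (hY : Y ⊆ G.edgeFinset) hconn x hx y hy z hz hyx hzx
    (hr : ((lineH G).restrict (G.edgeFinset \ {x})).Reach y z) => ?_
  obtain ⟨v, hv⟩ : ∃ v, v ∈ y := ⟨_, Sym2.out_fst_mem y⟩
  obtain ⟨w, hw⟩ : ∃ w, w ∈ z := ⟨_, Sym2.out_fst_mem z⟩
  have hyYx : y ∈ Y \ {x} := by simp [hy, hyx]
  have hzYx : z ∈ Y \ {x} := by simp [hz, hzx]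
  have hYx : Y \ {x} ⊆ G.edgeFinset \ {x} := Finset.sdiff_subset_sdiff hY le_rfl
  have hreach_off_x : (fromEdgeSet ↑(G.edgeFinset \ {x})).Reachable v w :=
    (lineH_restrict_reach_iff Finset.sdiff_subset (hYx hyYx) (hYx hzYx) hv hw).mp hr
  have hreach_in_Y : (fromEdgeSet ↑Y).Reachable v w :=
    (lineH_restrict_reach_iff hY hy hz hv hw).mp <|
      (connected_iff.mp hconn).2 y (by simp [hy, hY hy]) z (by simp [hz, hY hz])
  have hreach := hG.reachable_inf (fromEdgeSet_le_of_subset_edgeFinset hY)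
    (fromEdgeSet_le_of_subset_edgeFinset Finset.sdiff_subset) hreach_in_Y hreach_off_x
  rw [← fromEdgeSet_inter, ← Finset.coe_inter, ← Finset.inter_sdiff_assoc,
    Finset.inter_eq_left.mpr hY] at hreach
  exact (lineH_restrict_reach_iff (hYx.trans Finset.sdiff_subset) hyYx hzYx hv hw).mpr hreach

end LineHypergraph

/-- Theorem `thm:examples` (e).  For every finite tree `𝒯` with at
least one edge, the line-graph hypergraph of `𝒯` (underlying the operahedron of `𝒯`) is a
connected contextual hypergraph. -/
theorem stmt19 {V : Type*} [Fintype V] [DecidableEq V] (G : SimpleGraph V)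
    [DecidableRel G.Adj] (hG : G.IsTree) (hE : G.edgeFinset.Nonempty) :
    (lineH G).Connected ∧ (lineH G).Contextual :=
  ⟨lineH_connected hG.connected hE, lineH_contextual hG.isAcyclic⟩
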